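/- Let γ(t) = (p + u·t, q + v·t, r + p·v·t + u·v·t²/2 + w·t) be a Nil translation curve with (u,v) ≠ (0,0), and let 0 < t₁ < t₂. Then the Euclidean simple ratio of the fibre projections satisfies dist(π(γ(0)), π(γ(t₁))) / dist(π(γ(t₁)), π(γ(t₂))) = t₁/(t₂ − t₁); i.e., it equals the Nil simple ratio of the points γ(0), γ(t₁), γ(t₂) (the ratio of their translation distances along the curve). Moreover, if (u,v) = (0,0) (a fibre-like curve), then the Euclidean distance between γ(t₁) and γ(t₂) equals |w|·|t₂ − t₁|, the translation arc length between them. -/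

import Mathlib

/-- The Nil translation curve starting at `P = (p,q,r)` with direction `(u,v,w)`. -/
noncomputable def nilCurve (P d : ℝ × ℝ × ℝ) : ℝ → ℝ × ℝ × ℝ :=
  fun t =>
    (P.1 + d.1 * t,
     P.2.1 + d.2.1 * t,
     P.2.2 + P.1 * d.2.1 * t + d.1 * d.2.1 * t ^ 2 / 2 + d.2.2 * t)

/-- The fibre projection `π(a,b,c) = (a,b)`. -/
def fibreProj : ℝ × ℝ × ℝ → ℝ × ℝ := fun q => (q.1, q.2.1)

/-- Euclidean distance in the plane ℝ². -/
noncomputable def euclDist2 (a b : ℝ × ℝ) : ℝ :=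
  Real.sqrt ((a.1 - b.1) ^ 2 + (a.2 - b.2) ^ 2)

/-- Euclidean distance in ℝ³. -/
noncomputable def euclDist3 (a b : ℝ × ℝ × ℝ) : ℝ :=
  Real.sqrt ((a.1 - b.1) ^ 2 + (a.2.1 - b.2.1) ^ 2 + (a.2.2 - b.2.2) ^ 2)


/-! Along a translation curve the first two coordinates move affinely with speed `‖(u, v)‖`,
so the fibre projection scales every parameter interval by the same factor, which cancels in
the simple ratio. A fibre-like curve is a vertical line traversed at speed `|w|`. -/

theorem euclDist2_fibreProj_nilCurve (P d : ℝ × ℝ × ℝ) (a b : ℝ) :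
    euclDist2 (fibreProj (nilCurve P d a)) (fibreProj (nilCurve P d b)) =
      √(d.1 ^ 2 + d.2.1 ^ 2) * |a - b| := by
  have hdiff : (P.1 + d.1 * a - (P.1 + d.1 * b)) ^ 2 + (P.2.1 + d.2.1 * a - (P.2.1 + d.2.1 * b)) ^ 2
      = (d.1 ^ 2 + d.2.1 ^ 2) * (a - b) ^ 2 := by ring
  rw [euclDist2, fibreProj, fibreProj, nilCurve, nilCurve, hdiff,
    Real.sqrt_mul (by positivity), Real.sqrt_sq_eq_abs]

theorem euclDist3_nilCurve_of_fibre (P d : ℝ × ℝ × ℝ) (hd₁ : d.1 = 0) (hd₂ : d.2.1 = 0)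
    (a b : ℝ) : euclDist3 (nilCurve P d a) (nilCurve P d b) = |d.2.2| * |b - a| := by
  have hdiff : (P.1 + d.1 * a - (P.1 + d.1 * b)) ^ 2 + (P.2.1 + d.2.1 * a - (P.2.1 + d.2.1 * b)) ^ 2
      + (P.2.2 + P.1 * d.2.1 * a + d.1 * d.2.1 * a ^ 2 / 2 + d.2.2 * a
        - (P.2.2 + P.1 * d.2.1 * b + d.1 * d.2.1 * b ^ 2 / 2 + d.2.2 * b)) ^ 2
      = (d.2.2 * (b - a)) ^ 2 := by
    rw [hd₁, hd₂]; ring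
  rw [euclDist3, nilCurve, nilCurve, hdiff, Real.sqrt_sq_eq_abs, abs_mul]

/-- On a non-fibre-like Nil translation curve, the Euclidean simple ratio of the
fibre projections of `γ(0), γ(t₁), γ(t₂)` equals `t₁/(t₂−t₁)`, the Nil simple
ratio of the three points. For a fibre-like curve, the Euclidean distance between
`γ(t₁)` and `γ(t₂)` equals the translation arc length `|w|·|t₂−t₁|`. -/
theorem nil_simple_ratio_via_fibre_projection
    (p q r u v w t₁ t₂ : ℝ) (ht₁ : 0 < t₁) (ht₂ : t₁ < t₂) :
    ((u, v) ≠ ((0 : ℝ), (0 : ℝ)) →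
      euclDist2 (fibreProj (nilCurve (p, q, r) (u, v, w) 0))
          (fibreProj (nilCurve (p, q, r) (u, v, w) t₁)) /
        euclDist2 (fibreProj (nilCurve (p, q, r) (u, v, w) t₁))
          (fibreProj (nilCurve (p, q, r) (u, v, w) t₂)) = t₁ / (t₂ - t₁)) ∧
    ((u, v) = ((0 : ℝ), (0 : ℝ)) →
      euclDist3 (nilCurve (p, q, r) (u, v, w) t₁) (nilCurve (p, q, r) (u, v, w) t₂) =
        |w| * |t₂ - t₁|) := by
  constructor
  · intro huv
    have hspeed : 0 < √(u ^ 2 + v ^ 2) := by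
      refine Real.sqrt_pos.2 (lt_of_le_of_ne (by positivity) (Ne.symm fun h => huv ?_))
      rw [sq, sq, mul_self_add_mul_self_eq_zero] at h
      rw [h.1, h.2]
    rw [euclDist2_fibreProj_nilCurve, euclDist2_fibreProj_nilCurve,
      mul_div_mul_left _ _ hspeed.ne', zero_sub, abs_neg, abs_of_pos ht₁, abs_sub_comm,
      abs_of_pos (sub_pos.2 ht₂)]
  · intro huv
    obtain ⟨rfl, rfl⟩ := Prod.mk.inj huv
    exact euclDist3_nilCurve_of_fibre _ _ rfl rfl t₁ t₂
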